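/- Let d ≥ 2 and n ≥ 1 be integers and set δ := 1/(n+2). If x ∈ S^{n+δ} satisfies 0 ≤ x_d ≤ δ, then there exists a pair (v,π), with v ∈ ℤ^d admissible for n+1 and v_d = 0, such that x belongs to the Kuhn simplex k((1−δ)v, π). -/

import Mathlib

/-- The right `d`-simplex `S^α = {x ∈ ℝ^d : α ≥ x_1 ≥ x_2 ≥ … ≥ x_d ≥ 0}`
(coordinates indexed by `Fin d`, in order). -/
def Sset (d : ℕ) (α : ℝ) : Set (Fin d → ℝ) :=
  {x | (∀ i : Fin d, 0 ≤ x i ∧ x i ≤ α) ∧ ∀ i j : Fin d, i ≤ j → x j ≤ x i}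

/-- The Kuhn simplex `k(v,π) = {x : 1 ≥ (x−v)_{π(1)} ≥ … ≥ (x−v)_{π(d)} ≥ 0}`. -/
def kuhn (d : ℕ) (v : Fin d → ℝ) (π : Equiv.Perm (Fin d)) : Set (Fin d → ℝ) :=
  {x | (∀ i : Fin d, 0 ≤ x (π i) - v (π i) ∧ x (π i) - v (π i) ≤ 1) ∧
       ∀ i j : Fin d, i ≤ j → x (π j) - v (π j) ≤ x (π i) - v (π i)}

/-- `(v,π)` with `v ∈ ℤ^d` is admissible for `m` if `v ∈ S^{m-1}` and whenever
`v_j = v_{j+1}`, `j` precedes `j+1` in `π`, i.e. `π⁻¹(j) < π⁻¹(j+1)`. -/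
def admissible (d m : ℕ) (v : Fin d → ℤ) (π : Equiv.Perm (Fin d)) : Prop :=
  ((fun i => (v i : ℝ)) ∈ Sset d ((m : ℝ) - 1)) ∧
  ∀ (j : Fin d) (h : (j : ℕ) + 1 < d),
    v j = v ⟨(j : ℕ) + 1, h⟩ → π.symm j < π.symm ⟨(j : ℕ) + 1, h⟩

/-!
Put `c := 1 - δ`, so that `c (n + 1) = n + δ`. Rounding each coordinate down to the grid `c ℤ`,
with the index capped at `n`, gives an integer point `v ∈ S^n` whose cell `c v + [0, c]^d`
contains `x`; as `c ≤ 1`, `x` then lies in the Kuhn simplex `k(c v, π)` of any `π` that sorts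
`x - c v` decreasingly. Breaking ties by coordinate index makes `(v, π)` admissible: where
`v_j = v_{j+1}`, the coordinate `j` of `x - c v` is at least coordinate `j + 1` since `x` is
decreasing. Finally `x_d ≤ δ < c` forces `v_d = 0`.
-/

open Equiv OrderDual

theorem exists_perm_antitone_comp_stable {α : Type*} [LinearOrder α] {d : ℕ} (y : Fin d → α) :
    ∃ σ : Perm (Fin d), Antitone (y ∘ σ) ∧ ∀ i j, i < j → y j ≤ y i → σ.symm i < σ.symm j := by
  set f : Fin d → αᵒᵈ := toDual ∘ y
  -- `Tuple.sort f` sorts the pairs `(f i, i)` lexicographically, so ties are broken by index.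
  have hσ : StrictMono ((Tuple.sort f).trans (Tuple.graphEquiv₁ f)) := Tuple.eq_sort_iff'.1 rfl
  refine ⟨Tuple.sort f, monotone_toDual_comp_iff.1 (Tuple.monotone_sort f), fun i j hij hy => ?_⟩
  rw [← hσ.lt_iff_lt]
  simp only [Equiv.trans_apply, Equiv.apply_symm_apply]
  exact Prod.Lex.toLex_lt_toLex.2 <|
    hy.lt_or_eq.imp toDual_lt_toDual.2 fun h => ⟨congrArg toDual h.symm, hij⟩

theorem exists_mem_kuhn_stable {d : ℕ} {v x : Fin d → ℝ}
    (hx : ∀ i, 0 ≤ x i - v i ∧ x i - v i ≤ 1) :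
    ∃ π : Perm (Fin d), x ∈ kuhn d v π ∧
      ∀ i j, i < j → x j - v j ≤ x i - v i → π.symm i < π.symm j := by
  obtain ⟨π, hanti, hstable⟩ := exists_perm_antitone_comp_stable fun i => x i - v i
  exact ⟨π, ⟨fun i => hx (π i), fun i j hij => hanti hij⟩, hstable⟩

noncomputable def gridIndex (c : ℝ) (n : ℕ) (t : ℝ) : ℤ := min ⌊t / c⌋ n

section gridIndex

variable {c t : ℝ} {n : ℕ}

theorem gridIndex_nonneg (hc : 0 ≤ c) (ht : 0 ≤ t) : 0 ≤ gridIndex c n t :=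
  le_min (Int.floor_nonneg.2 (div_nonneg ht hc)) (Int.natCast_nonneg n)

theorem gridIndex_le : gridIndex c n t ≤ n := min_le_right _ _

theorem gridIndex_mono (hc : 0 ≤ c) : Monotone (gridIndex c n) := fun _ _ hst =>
  min_le_min_right _ (Int.floor_mono (div_le_div_of_nonneg_right hst hc))

theorem gridIndex_eq_zero (hc : 0 < c) (ht₀ : 0 ≤ t) (ht : t < c) : gridIndex c n t = 0 := by
  rw [gridIndex, Int.floor_eq_zero_iff.2 ⟨div_nonneg ht₀ hc.le, (div_lt_one hc).2 ht⟩]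
  exact min_eq_left (Int.natCast_nonneg n)

theorem mul_gridIndex_le (hc : 0 < c) : c * gridIndex c n t ≤ t :=
  calc c * (gridIndex c n t : ℝ) ≤ c * ⌊t / c⌋ := by
        gcongr; exact_mod_cast min_le_left _ _
    _ ≤ c * (t / c) := by gcongr; exact Int.floor_le _
    _ = t := mul_div_cancel₀ t hc.ne'

theorem sub_mul_gridIndex_le (hc : 0 < c) (ht : t ≤ c * (n + 1)) :
    t - c * gridIndex c n t ≤ c := by
  rcases min_cases ⌊t / c⌋ (n : ℤ) with ⟨h, -⟩ | ⟨h, -⟩ <;> rw [gridIndex, h]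
  · have := (div_lt_iff₀ hc).1 (Int.lt_floor_add_one (t / c))
    linarith
  · push_cast
    linarith

theorem gridIndex_comp_mem_Sset {d : ℕ} {α : ℝ} {x : Fin d → ℝ} (hc : 0 < c)
    (hx : x ∈ Sset d α) : (fun i => (gridIndex c n (x i) : ℝ)) ∈ Sset d n := by
  refine ⟨fun i => ⟨?_, ?_⟩, fun i j hij => ?_⟩ <;> dsimp only
  · exact_mod_cast gridIndex_nonneg hc.le (hx.1 i).1
  · exact_mod_cast gridIndex_le
  · exact_mod_cast gridIndex_mono hc.le (hx.2 i j hij)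

end gridIndex

/-- if `x ∈ S^{n+δ}` with `0 ≤ x_d ≤ δ`, then there is a pair `(v,π)`
admissible for `n+1` with `v_d = 0` and `x ∈ k((1-δ)v, π)`. -/
theorem bottom_sliver_cover (d n : ℕ) (hd : 2 ≤ d) (hn : 1 ≤ n)
    (δ : ℝ) (hδ : δ = ((n : ℝ) + 2)⁻¹)
    (x : Fin d → ℝ) (hx : x ∈ Sset d ((n : ℝ) + δ))
    (hxd : x ⟨d - 1, by omega⟩ ≤ δ) :
    ∃ (v : Fin d → ℤ) (π : Equiv.Perm (Fin d)),
      admissible d (n + 1) v π ∧ v ⟨d - 1, by omega⟩ = 0 ∧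
      x ∈ kuhn d (fun i => (1 - δ) * (v i : ℝ)) π := by
  have hδ_pos : 0 < δ := by rw [hδ]; positivity
  have hδ_lt : δ < 1 - δ := by
    have : δ ≤ 3⁻¹ := hδ ▸ inv_anti₀ (by norm_num) (by norm_cast; omega)
    linarith
  have hc : 0 < 1 - δ := by linarith
  have hscale : (1 - δ) * ((n : ℝ) + 1) = n + δ := by rw [hδ]; field_simp; ring
  set v : Fin d → ℤ := fun i => gridIndex (1 - δ) n (x i)
  have hcell : ∀ i, 0 ≤ x i - (1 - δ) * v i ∧ x i - (1 - δ) * v i ≤ 1 := fun i =>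
    ⟨sub_nonneg.2 (mul_gridIndex_le hc),
      (sub_mul_gridIndex_le hc (hscale ▸ (hx.1 i).2)).trans (by linarith)⟩
  obtain ⟨π, hkuhn, hstable⟩ := exists_mem_kuhn_stable hcell
  refine ⟨v, π, ⟨by simpa using gridIndex_comp_mem_Sset hc hx, fun j hj hvj => ?_⟩,
    gridIndex_eq_zero hc (hx.1 _).1 (hxd.trans_lt hδ_lt), hkuhn⟩
  have hj_lt : j < ⟨j + 1, hj⟩ := Fin.lt_def.2 (Nat.lt_succ_self j)
  refine hstable _ _ hj_lt ?_
  rw [hvj]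
  linarith [hx.2 _ _ hj_lt.le]
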